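/- (Generator Lemma, first part) Let G be a group and let g = (g', g'') ∈ G^r be the concatenation of g' = [g'_1,…,g'_{u'}] = (g'_1,…,g'_{u'}, (g'_{u'})^{-1},…,(g'_1)^{-1}) with a tuple g'' whose entries have product 1. Then for every h in the subgroup of G generated by g'_1,…,g'_{u'}, the tuple g is braid equivalent to (g', h g'' h^{-1}), where h g'' h^{-1} denotes entrywise conjugation of g'' by h. -/
import Mathlib


/-- Elementary braid move: replace adjacent entries `(a, b)` by `(a * b * a⁻¹, a)`. -/
def BraidMove {G : Type*} [Group G] (x y : List G) : Prop :=
  ∃ (l₁ l₂ : List G) (a b : G),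
    x = l₁ ++ a :: b :: l₂ ∧ y = l₁ ++ (a * b * a⁻¹) :: a :: l₂

/-- Braid equivalence: the equivalence relation generated by elementary braid moves. -/
def BraidEquiv {G : Type*} [Group G] : List G → List G → Prop :=
  Relation.EqvGen BraidMove

/-- The bracket tuple `[g_1, …, g_u] = (g_1, …, g_u, g_u⁻¹, …, g_1⁻¹)`. -/
def hmBracket {G : Type*} [Group G] (l : List G) : List G :=
  l ++ l.reverse.map (fun x => x⁻¹)

section Aux
variable {G : Type*} [Group G]

theorem be_refl (x : List G) : BraidEquiv x x := Relation.EqvGen.refl x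

theorem be_symm {x y : List G} (h : BraidEquiv x y) : BraidEquiv y x :=
  Relation.EqvGen.symm x y h

theorem be_trans {x y z : List G} (h1 : BraidEquiv x y) (h2 : BraidEquiv y z) :
    BraidEquiv x z := Relation.EqvGen.trans x y z h1 h2

theorem be_congr {x x' y y' : List G} (hx : x = x') (hy : y = y')
    (h : BraidEquiv x y) : BraidEquiv x' y' := hx ▸ hy ▸ h

theorem be_append {x y : List G} (l r : List G) (h : BraidEquiv x y) :
    BraidEquiv (l ++ x ++ r) (l ++ y ++ r) := by
  induction h with
  | rel x y h =>
    obtain ⟨l₁, l₂, a, b, hx, hy⟩ := h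
    exact Relation.EqvGen.rel _ _
      ⟨l ++ l₁, l₂ ++ r, a, b, by simp [hx], by simp [hy]⟩
  | refl x => exact be_refl _
  | symm x y _ ih => exact be_symm ih
  | trans x y z _ _ ih1 ih2 => exact be_trans ih1 ih2

theorem cons_push (a : G) (t r : List G) :
    BraidEquiv (a :: (t ++ r)) (t.map (fun x => a * x * a⁻¹) ++ a :: r) := by
  induction t generalizing r with
  | nil => exact be_refl _
  | cons x t' ih =>
    refine be_trans (Relation.EqvGen.rel _ _
      ⟨[], t' ++ r, a, x, rfl, rfl⟩) ?_
    have := be_append [a * x * a⁻¹] [] (ih r)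
    exact be_congr (by simp) (by simp) this

theorem block_push (s t r : List G) :
    BraidEquiv (s ++ (t ++ r)) (t.map (fun x => s.prod * x * s.prod⁻¹) ++ (s ++ r)) := by
  induction s generalizing r with
  | nil =>
    exact be_congr rfl (by simp) (be_refl _)
  | cons c s' ih =>
    have h1 : BraidEquiv (c :: (s' ++ (t ++ r)))
        (c :: (t.map (fun x => s'.prod * x * s'.prod⁻¹) ++ (s' ++ r))) := by
      have := be_append [c] [] (ih r)
      exact be_congr (by simp) (by simp) this
    refine be_trans h1 ?_
    have h2 := cons_push c (t.map (fun x => s'.prod * x * s'.prod⁻¹)) (s' ++ r)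
    refine be_congr rfl ?_ h2
    simp only [List.map_map, List.prod_cons]
    have : ((fun x => c * x * c⁻¹) ∘ fun x => s'.prod * x * s'.prod⁻¹)
        = fun x => (c * s'.prod) * x * (c * s'.prod)⁻¹ := by
      funext x; simp [Function.comp_def, mul_assoc]
    rw [this]; simp

theorem block_swap (s t r : List G) (hs : s.prod = 1) :
    BraidEquiv (s ++ (t ++ r)) (t ++ (s ++ r)) := by
  have := block_push s t r
  rw [hs] at this
  simpa using this

theorem prod_map_conj (h : G) (t : List G) :
    (t.map (fun x => h * x * h⁻¹)).prod = h * t.prod * h⁻¹ := by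
  induction t with
  | nil => simp
  | cons x t ih =>
    rw [List.map_cons, List.prod_cons, List.prod_cons, ih]
    group

theorem hmBracket_prod (l : List G) : (hmBracket l).prod = 1 := by
  have := List.prod_inv_reverse l
  rw [hmBracket, List.prod_append, List.map_reverse]
  rw [← this]
  simp

/-- key block manipulation -/
theorem main_block (A M C t : List G) (a : G) (hM : M.prod = 1) (ht : t.prod = 1) :
    BraidEquiv (A ++ [a] ++ M ++ [a⁻¹] ++ C ++ t)
      (A ++ [a] ++ M ++ [a⁻¹] ++ C ++ t.map (fun x => a * x * a⁻¹)) := by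
  set ct := t.map (fun x => a * x * a⁻¹) with hct
  have hW : ([a] ++ M ++ [a⁻¹]).prod = 1 := by simp [hM]
  have hctprod : ct.prod = 1 := by rw [hct, prod_map_conj, ht]; group
  -- step 1: move W = [a] ++ M ++ [a⁻¹] right past C ++ t
  have s1 : BraidEquiv (A ++ [a] ++ M ++ [a⁻¹] ++ C ++ t)
      (A ++ C ++ t ++ [a] ++ M ++ [a⁻¹]) := by
    have := be_append A [] (block_swap ([a] ++ M ++ [a⁻¹]) (C ++ t) [] hW)
    exact be_congr (by simp) (by simp) this
  -- step 2: move t right past [a]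
  have s2 : BraidEquiv (A ++ C ++ t ++ [a] ++ M ++ [a⁻¹])
      (A ++ C ++ [a] ++ t ++ M ++ [a⁻¹]) := by
    have := be_append (A ++ C) [] (block_swap t [a] (M ++ [a⁻¹]) ht)
    exact be_congr (by simp) (by simp) this
  -- step 3: push [a] right through t, conjugating it
  have s3 : BraidEquiv (A ++ C ++ [a] ++ t ++ M ++ [a⁻¹])
      (A ++ C ++ ct ++ [a] ++ M ++ [a⁻¹]) := by
    have := be_append (A ++ C) [] (block_push [a] t (M ++ [a⁻¹]))
    refine be_congr (by simp) ?_ this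
    simp [hct]
  -- step 4: move ct right past W
  have s4 : BraidEquiv (A ++ C ++ ct ++ [a] ++ M ++ [a⁻¹])
      (A ++ C ++ [a] ++ M ++ [a⁻¹] ++ ct) := by
    have := be_append (A ++ C) [] (block_swap ct ([a] ++ M ++ [a⁻¹]) [] hctprod)
    exact be_congr (by simp) (by simp) this
  -- step 5: move W left past C
  have s5 : BraidEquiv (A ++ C ++ [a] ++ M ++ [a⁻¹] ++ ct)
      (A ++ [a] ++ M ++ [a⁻¹] ++ C ++ ct) := by
    have := be_append A [] (block_swap ([a] ++ M ++ [a⁻¹]) C ct hW)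
    exact be_symm (be_congr (by simp) (by simp) this)
  exact be_trans s1 (be_trans s2 (be_trans s3 (be_trans s4 s5)))

end Aux


/-- **Generator Lemma, first part.** If `g = (g', g'')` with `g' = [g'_1,…,g'_{u'}]`
and `Π(g'') = 1`, then for every `h` in the subgroup generated by `g'_1,…,g'_{u'}`,
`g` is braid equivalent to `(g', h g'' h⁻¹)`. -/
theorem generator_lemma_first {G : Type*} [Group G] {u' : ℕ}
    (gp : Fin u' → G) (g'' : List G) (hprod : g''.prod = 1)
    (h : G) (hh : h ∈ Subgroup.closure (Set.range gp)) :
    BraidEquiv (hmBracket (List.ofFn gp) ++ g'')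
      (hmBracket (List.ofFn gp) ++ g''.map (fun x => h * x * h⁻¹)) := by
  set L := List.ofFn gp with hL
  -- main claim, for all product-one tuples
  suffices H : ∀ t : List G, t.prod = 1 →
      BraidEquiv (hmBracket L ++ t) (hmBracket L ++ t.map (fun x => h * x * h⁻¹)) from
    H g'' hprod
  induction hh using Subgroup.closure_induction with
  | mem a ha =>
    intro t ht
    have haL : a ∈ L := by rw [hL, List.mem_ofFn]; exact ha
    obtain ⟨A, B, hdec⟩ := List.append_of_mem haL
    have hbr : hmBracket L = A ++ [a] ++ hmBracket B ++ [a⁻¹] ++ (A.reverse.map (fun x => x⁻¹)) := by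
      rw [hdec, hmBracket, hmBracket]
      simp [List.reverse_append]
    rw [hbr]
    have := main_block A (hmBracket B) (A.reverse.map (fun x => x⁻¹)) t a
      (hmBracket_prod B) ht
    exact be_congr (by simp) (by simp) this
  | one =>
    intro t ht
    simp only [one_mul, inv_one, mul_one, List.map_id']
    exact be_refl _
  | mul x y hx hy ihx ihy =>
    intro t ht
    have h1 := ihy t ht
    have h2 := ihx (t.map (fun z => y * z * y⁻¹)) (by rw [prod_map_conj, ht]; group)
    refine be_trans h1 (be_congr rfl ?_ h2)
    simp only [List.map_map]
    have : ((fun x_1 => x * x_1 * x⁻¹) ∘ fun z => y * z * y⁻¹)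
        = fun z => (x * y) * z * (x * y)⁻¹ := by
      funext z; simp [Function.comp_def, mul_assoc]
    rw [this]
  | inv x hx ihx =>
    intro t ht
    have h1 := ihx (t.map (fun z => x⁻¹ * z * x⁻¹⁻¹)) (by rw [prod_map_conj, ht]; group)
    have e : (t.map (fun z => x⁻¹ * z * x⁻¹⁻¹)).map (fun z => x * z * x⁻¹) = t := by
      simp only [List.map_map]
      have : ((fun z => x * z * x⁻¹) ∘ fun z => x⁻¹ * z * x⁻¹⁻¹) = id := by
        funext z; simp [mul_assoc]
      rw [this, List.map_id]
    rw [e] at h1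
    exact be_symm h1
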